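/- arXiv:1204.0482 — 3 statements merged into one kernel-verified Lean document; each statement's English description precedes it below -/
import Mathlib

section
/- For every simple graph G on a finite vertex set V, every transition function t on V, and every vertex v ∈ V, the matrices M(G^v, t^{G,v}) and M(G, t) have the same right null space over GF(2), i.e. { x ∈ GF(2)^V : M(G^v, t^{G,v}) · x = 0 } = { x ∈ GF(2)^V : M(G, t) · x = 0 }, and they have the same rank over GF(2). (This is the combinatorial form of the fact that all modified interlacement matrices M(C, P) of a fixed circuit partition P, taken with respect to κ-equivalent Euler systems, have the same kernel and rank.) -/
open scoped Classical

/-- The three transitions at a vertex, labeled relative to an Euler system. -/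
inductive Transition : Type
  | phi | chi | psi
  deriving DecidableEq

variable {V : Type*} [Fintype V] [DecidableEq V]

/-- Simple local complement `G^v`: toggle adjacency between distinct neighbors of `v`. -/
def localComp (G : SimpleGraph V) (v : V) : SimpleGraph V where
  Adj u w := u ≠ w ∧ Xor' (G.Adj u w) (G.Adj v u ∧ G.Adj v w)
  symm := by
    constructor
    rintro u w ⟨hne, hx⟩
    refine ⟨hne.symm, ?_⟩
    rw [G.adj_comm w u, and_comm]
    exact hx
  loopless := by constructor; rintro u ⟨hne, _⟩; exact hne rfl

/-- Modified interlacement matrix `M(G, t)` over GF(2). -/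
noncomputable def Mmat (G : SimpleGraph V) (t : V → Transition) : Matrix V V (ZMod 2) :=
  Matrix.of fun w u =>
    if w = u then (if t u = Transition.chi then 0 else 1)
    else if t u = Transition.phi then 0
    else if G.Adj w u then 1 else 0

/-- Updated transition function `t^{G,v}`. -/
noncomputable def updT (G : SimpleGraph V) (v : V) (t : V → Transition) : V → Transition :=
  fun u =>
    if u = v then
      match t u with
      | Transition.phi => Transition.psi
      | Transition.psi => Transition.phi
      | Transition.chi => Transition.chi
    else if G.Adj v u then
      match t u with
      | Transition.chi => Transition.psi
      | Transition.psi => Transition.chi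
      | Transition.phi => Transition.phi
    else t u

/-- Modified local complement of a matrix, taken with respect to `G` at `v`:
add row `v` to the row of every neighbor of `v` in `G`. -/
noncomputable def modLC (G : SimpleGraph V) (v : V) (M : Matrix V V (ZMod 2)) :
    Matrix V V (ZMod 2) :=
  Matrix.of fun w u => if G.Adj v w then M w u + M v u else M w u

/-!
Column by column, `M(G^v, t^{G,v})` is obtained from `M(G, t)` by adding row `v` to every row
indexed by a neighbour of `v`. Over GF(2) this row operation is an involution, hence left
multiplication by an invertible matrix, which preserves both the null space and the rank.
-/

open Matrix

section LocalComplement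

omit [Fintype V] [DecidableEq V]

variable (G : SimpleGraph V) (v : V)

theorem localComp_adj {w u : V} :
    (localComp G v).Adj w u ↔ w ≠ u ∧ Xor (G.Adj w u) (G.Adj v w ∧ G.Adj v u) :=
  Iff.rfl

theorem localComp_adj_of_not_adj_right {w u : V} (hu : ¬G.Adj v u) :
    (localComp G v).Adj w u ↔ G.Adj w u := by
  simpa [localComp_adj, hu, xor_def] using G.ne_of_adj

theorem localComp_adj_of_not_adj_left {w u : V} (hw : ¬G.Adj v w) :
    (localComp G v).Adj w u ↔ G.Adj w u := by
  rw [SimpleGraph.adj_comm, localComp_adj_of_not_adj_right G v hw, G.adj_comm]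

theorem localComp_adj_of_adj_of_adj {w u : V} (hw : G.Adj v w) (hu : G.Adj v u) (hwu : w ≠ u) :
    (localComp G v).Adj w u ↔ ¬G.Adj w u := by
  simp [localComp_adj, hw, hu, hwu, xor_def]

end LocalComplement

section InterlacementMatrix

omit [Fintype V]

variable (G : SimpleGraph V) (v : V) (t : V → Transition)

theorem Mmat_localComp_apply_self_right (w : V) :
    Mmat (localComp G v) (updT G v t) w v = modLC G v (Mmat G t) w v := by
  have hadj := localComp_adj_of_not_adj_right G v (G.irrefl : ¬G.Adj v v) (w := w)
  rcases eq_or_ne w v with rfl | hwv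
  · cases h : t w <;> simp [Mmat, modLC, updT, h]
  · cases h : t v <;> by_cases hw : G.Adj v w <;>
      simp [Mmat, modLC, updT, h, hwv, hadj, G.adj_comm w v, hw, CharTwo.add_self_eq_zero]

theorem Mmat_localComp_apply_of_adj {u : V} (hu : G.Adj v u) (w : V) :
    Mmat (localComp G v) (updT G v t) w u = modLC G v (Mmat G t) w u := by
  have hvu : v ≠ u := G.ne_of_adj hu
  rcases eq_or_ne w u with rfl | hwu
  · cases h : t w <;> simp [Mmat, modLC, updT, h, hu, hvu, hvu.symm, CharTwo.add_self_eq_zero]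
  by_cases hw : G.Adj v w
  · have hadj := localComp_adj_of_adj_of_adj G v hw hu hwu
    cases h : t u <;> by_cases hG : G.Adj w u <;>
      simp [Mmat, modLC, updT, h, hu, hw, hvu, hvu.symm, hwu, hadj, hG, CharTwo.add_self_eq_zero]
  · have hadj := localComp_adj_of_not_adj_left G v hw (u := u)
    cases h : t u <;> simp [Mmat, modLC, updT, h, hu, hw, hvu.symm, hwu, hadj]

theorem Mmat_localComp_apply_of_not_adj {u : V} (hu : ¬G.Adj v u) (hvu : v ≠ u) (w : V) :
    Mmat (localComp G v) (updT G v t) w u = modLC G v (Mmat G t) w u := by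
  have hadj := localComp_adj_of_not_adj_right G v hu (w := w)
  cases h : t u <;> simp [Mmat, modLC, updT, h, hu, hvu, hvu.symm, hadj]

theorem Mmat_localComp_eq_modLC :
    Mmat (localComp G v) (updT G v t) = modLC G v (Mmat G t) := by
  ext w u
  rcases eq_or_ne v u with rfl | hvu
  · exact Mmat_localComp_apply_self_right G v t w
  by_cases hu : G.Adj v u
  · exact Mmat_localComp_apply_of_adj G v t hu w
  · exact Mmat_localComp_apply_of_not_adj G v t hu hvu w

end InterlacementMatrix

section RowOperation

variable (G : SimpleGraph V) (v : V) (M : Matrix V V (ZMod 2))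

theorem modLC_eq_mul : modLC G v M = modLC G v 1 * M := by
  ext w u
  by_cases h : G.Adj v w <;>
    simp [modLC, h, mul_apply, one_apply, add_mul, Finset.sum_add_distrib]

omit [Fintype V] [DecidableEq V] in
theorem modLC_modLC : modLC G v (modLC G v M) = M := by
  ext w u
  by_cases h : G.Adj v w <;> simp [modLC, h, add_assoc, CharTwo.add_self_eq_zero]

theorem rank_modLC : (modLC G v M).rank = M.rank := by
  have hinv : modLC G v 1 * modLC G v 1 = 1 := by rw [← modLC_eq_mul, modLC_modLC]
  rw [modLC_eq_mul]
  exact rank_mul_eq_right_of_isUnit_det _ _ (isUnit_det_of_left_inverse hinv)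

theorem mulVec_modLC_eq_zero_iff (x : V → ZMod 2) : modLC G v M *ᵥ x = 0 ↔ M *ᵥ x = 0 := by
  have h : ∀ N : Matrix V V (ZMod 2), N *ᵥ x = 0 → modLC G v N *ᵥ x = 0 := fun N hN => by
    rw [modLC_eq_mul, ← mulVec_mulVec, hN, mulVec_zero]
  exact ⟨fun hM => modLC_modLC G v M ▸ h _ hM, h M⟩

end RowOperation

/-- `M(G^v, t^{G,v})` and `M(G, t)` have the same right null space and the
same rank over GF(2). -/
theorem ker_rank_localComp (G : SimpleGraph V) (t : V → Transition) (v : V) :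
    {x : V → ZMod 2 | (Mmat (localComp G v) (updT G v t)).mulVec x = 0} =
      {x : V → ZMod 2 | (Mmat G t).mulVec x = 0} ∧
    (Mmat (localComp G v) (updT G v t)).rank = (Mmat G t).rank := by
  rw [Mmat_localComp_eq_modLC]
  exact ⟨Set.ext fun x => mulVec_modLC_eq_zero_iff G v _ x, rank_modLC G v _⟩
end

section
/- For every double occurrence word w over a finite type V and every v ∈ V, the interlacement graph of the κ-transform equals the simple local complement of the interlacement graph: I(w∗v) = (I(w))^v. -/
variable {V : Type*} [Fintype V] [DecidableEq V]

/-- The interlacement graph of a word `w`: distinct `u` and `x` are adjacent iff their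
occurrences alternate in `w`, i.e. the restriction of `w` to `{u, x}` is
`[u, x, u, x]` or `[x, u, x, u]`. -/
def interlacement (w : List V) : SimpleGraph V where
  Adj u x := u ≠ x ∧
    (w.filter (fun y => decide (y = u ∨ y = x)) = [u, x, u, x] ∨
     w.filter (fun y => decide (y = u ∨ y = x)) = [x, u, x, u])
  symm := by
    constructor
    rintro u x ⟨hne, h⟩
    refine ⟨hne.symm, ?_⟩
    have hp : (fun y => decide (y = x ∨ y = u)) = (fun y => decide (y = u ∨ y = x)) := by
      funext y; exact decide_eq_decide.mpr or_comm
    rw [hp]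
    exact h.symm
  loopless := by constructor; rintro u ⟨hne, _⟩; exact hne rfl

/-! Restrict both words to a pair `{u, x}` of letters other than `v`: the κ-transform reverses
the middle block of the resulting four-letter word, and a finite check shows that this toggles
alternation exactly when the block contains one `u` and one `x`, that is, when both `u` and `x`
are interlaced with `v`. A pair `{v, y}` is interlaced iff `y` occurs once between the two `v`s,
which reversing that stretch does not change. -/

section Alternates

variable {α : Type*}

def Alternates (l : List α) (u x : α) : Prop := l = [u, x, u, x] ∨ l = [x, u, x, u]

theorem alternates_replicate_iff {v y : α} (hvy : v ≠ y) {i j k : ℕ} (h : i + j + k = 2) :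
    Alternates (List.replicate i y ++ [v] ++ List.replicate j y ++ [v] ++ List.replicate k y)
      v y ↔ j = 1 := by
  obtain rfl : k = 2 - i - j := by omega
  have : i ≤ 2 := by omega
  have : j ≤ 2 - i := by omega
  interval_cases i <;> interval_cases j <;> simp [Alternates, hvy, hvy.symm]

end Alternates

theorem alternates_take_drop_reverse_iff :
    ∀ (b₁ b₂ b₃ b₄ : Bool) (i j : Fin 5), i ≤ j →
      [b₁, b₂, b₃, b₄].count true = 2 → [b₁, b₂, b₃, b₄].count false = 2 →
      (Alternates ([b₁, b₂, b₃, b₄].take i ++ (([b₁, b₂, b₃, b₄].take j).drop i).reverse ++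
          [b₁, b₂, b₃, b₄].drop j) true false ↔
        Xor (Alternates [b₁, b₂, b₃, b₄] true false)
          ((([b₁, b₂, b₃, b₄].take j).drop i).count true = 1 ∧
            (([b₁, b₂, b₃, b₄].take j).drop i).count false = 1)) := by
  unfold Alternates Xor
  decide

theorem alternates_append_reverse_iff_bool {la lb lc : List Bool}
    (ht : (la ++ lb ++ lc).count true = 2) (hf : (la ++ lb ++ lc).count false = 2) :
    Alternates (la ++ lb.reverse ++ lc) true false ↔
      Xor (Alternates (la ++ lb ++ lc) true false) (lb.count true = 1 ∧ lb.count false = 1) := by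
  obtain ⟨b₁, b₂, b₃, b₄, hl⟩ : ∃ b₁ b₂ b₃ b₄, la ++ lb ++ lc = [b₁, b₂, b₃, b₄] := by
    have h4 := List.count_true_add_count_false (la ++ lb ++ lc)
    rw [ht, hf] at h4
    generalize la ++ lb ++ lc = l at h4
    match l, h4 with
    | [b₁, b₂, b₃, b₄], _ => exact ⟨b₁, b₂, b₃, b₄, rfl⟩
  have hlen : la.length + lb.length ≤ 4 := by
    have := congrArg List.length hl
    simp only [List.length_append, List.length_cons, List.length_nil] at this
    omega
  have hla : la = [b₁, b₂, b₃, b₄].take la.length := by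
    simp [← hl]
  have hlb : lb = (([b₁, b₂, b₃, b₄].take (la.length + lb.length)).drop la.length) := by
    simp [← hl, List.take_append]
  have hlc : lc = [b₁, b₂, b₃, b₄].drop (la.length + lb.length) := by
    simp [← hl, List.drop_append]
  have key := alternates_take_drop_reverse_iff b₁ b₂ b₃ b₄ ⟨la.length, by omega⟩
    ⟨la.length + lb.length, by omega⟩ (by simp [Fin.le_def]) (hl ▸ ht) (hl ▸ hf)
  simp only at key
  rw [← hla, ← hlb, ← hlc, ← hl] at key
  exact key

section DoubleOccurrence

variable {α : Type*} [DecidableEq α]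

theorem alternates_append_reverse_iff {u x : α} (hux : u ≠ x) {la lb lc : List α}
    (hmem : ∀ y ∈ la ++ lb ++ lc, y = u ∨ y = x)
    (hu : (la ++ lb ++ lc).count u = 2) (hx : (la ++ lb ++ lc).count x = 2) :
    Alternates (la ++ lb.reverse ++ lc) u x ↔
      Xor (Alternates (la ++ lb ++ lc) u x) (lb.count u = 1 ∧ lb.count x = 1) := by
  let f : Bool → α := fun b => cond b u x
  have hf : Function.Injective f := by
    intro b b'; cases b <;> cases b' <;> simp [f, hux, hux.symm]
  have hlift : ∀ l : List α, (∀ y ∈ l, y = u ∨ y = x) → ∃ l' : List Bool, l'.map f = l := by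
    intro l hl
    rw [← Set.mem_range, Set.range_list_map]
    intro y hy
    rcases hl y hy with rfl | rfl
    exacts [⟨true, rfl⟩, ⟨false, rfl⟩]
  obtain ⟨la, rfl⟩ := hlift la fun y hy => hmem y (by simp [hy])
  obtain ⟨lb, rfl⟩ := hlift lb fun y hy => hmem y (by simp [hy])
  obtain ⟨lc, rfl⟩ := hlift lc fun y hy => hmem y (by simp [hy])
  have halt : ∀ l : List Bool, Alternates (l.map f) u x ↔ Alternates l true false := fun l =>
    have hinj := List.map_injective_iff.2 hf
    or_congr (hinj.eq_iff (b := [true, false, true, false]))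
      (hinj.eq_iff (b := [false, true, false, true]))
  have hcount (l : List Bool) (b : Bool) : (l.map f).count (f b) = l.count b :=
    List.count_map_of_injective l f hf b
  simp only [← List.map_append, ← List.map_reverse, halt] at hu hx ⊢
  have key := alternates_append_reverse_iff_bool ((hcount _ true).symm.trans hu)
    ((hcount _ false).symm.trans hx)
  rwa [← hcount lb true, ← hcount lb false] at key

theorem filter_eq_or_eq_of_notMem {l : List α} {v : α} (hv : v ∉ l) (y : α) :
    l.filter (fun z => decide (z = v ∨ z = y)) = List.replicate (l.count y) y := by
  rw [← List.filter_eq]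
  refine List.filter_congr fun z hz => ?_
  have : z ≠ v := fun h => hv (h ▸ hz)
  simp [this]

theorem notMem_of_count_eq_two {a b c : List α} {v : α}
    (hv : (a ++ [v] ++ b ++ [v] ++ c).count v = 2) : v ∉ a ∧ v ∉ b ∧ v ∉ c := by
  simp only [List.count_append, List.count_singleton_self] at hv
  simp only [← List.count_eq_zero]
  omega

theorem interlacement_adj_iff (w : List α) (u x : α) :
    (interlacement w).Adj u x ↔
      u ≠ x ∧ Alternates (w.filter fun y => decide (y = u ∨ y = x)) u x :=
  Iff.rfl

theorem interlacement_adj_iff_count_eq_one {a b c : List α} {v y : α} (hyv : y ≠ v)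
    (hv : (a ++ [v] ++ b ++ [v] ++ c).count v = 2) (hy : (a ++ [v] ++ b ++ [v] ++ c).count y = 2) :
    (interlacement (a ++ [v] ++ b ++ [v] ++ c)).Adj v y ↔ b.count y = 1 := by
  obtain ⟨hva, hvb, hvc⟩ := notMem_of_count_eq_two hv
  have hcount : a.count y + b.count y + c.count y = 2 := by
    simp only [List.count_append, List.count_singleton, beq_eq_false_iff_ne.2 hyv.symm,
      Bool.false_eq_true, if_false] at hy
    omega
  have hfilter : (a ++ [v] ++ b ++ [v] ++ c).filter (fun z => decide (z = v ∨ z = y)) =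
      List.replicate (a.count y) y ++ [v] ++ List.replicate (b.count y) y ++ [v] ++
        List.replicate (c.count y) y := by
    rw [List.filter_append, List.filter_append, List.filter_append, List.filter_append,
      filter_eq_or_eq_of_notMem hva, filter_eq_or_eq_of_notMem hvb, filter_eq_or_eq_of_notMem hvc]
    simp
  rw [interlacement_adj_iff, and_iff_right hyv.symm, hfilter,
    alternates_replicate_iff hyv.symm hcount]

end DoubleOccurrence

theorem localComp_adj_iff {α : Type*} (G : SimpleGraph α) (v u x : α) :
    (localComp G v).Adj u x ↔ u ≠ x ∧ Xor (G.Adj u x) (G.Adj v u ∧ G.Adj v x) :=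
  Iff.rfl

theorem localComp_adj_self_left {α : Type*} (G : SimpleGraph α) (v x : α) :
    (localComp G v).Adj v x ↔ G.Adj v x := by
  rw [localComp_adj_iff]
  constructor
  · rintro ⟨-, ⟨hvx, -⟩ | ⟨⟨hvv, -⟩, -⟩⟩
    exacts [hvx, (G.irrefl hvv).elim]
  · intro hvx
    exact ⟨G.ne_of_adj hvx, Or.inl ⟨hvx, fun h => G.irrefl h.1⟩⟩

section KappaTransform

variable {α : Type*} [DecidableEq α] {a b c : List α} {v : α}

theorem interlacement_kappa_adj_of_ne {u x : α}
    (hw : ∀ y, (a ++ [v] ++ b ++ [v] ++ c).count y = 2) (hu : u ≠ v) (hx : x ≠ v) :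
    (interlacement (a ++ [v] ++ b.reverse ++ [v] ++ c)).Adj u x ↔
      (localComp (interlacement (a ++ [v] ++ b ++ [v] ++ c)) v).Adj u x := by
  set p : α → Bool := fun y => decide (y = u ∨ y = x)
  have hpv : p v = false := by simp [p, hu.symm, hx.symm]
  have hfilter : (a ++ [v] ++ b ++ [v] ++ c).filter p = a.filter p ++ b.filter p ++ c.filter p := by
    simp [List.filter_append, hpv]
  have hfilter' : (a ++ [v] ++ b.reverse ++ [v] ++ c).filter p =
      a.filter p ++ (b.filter p).reverse ++ c.filter p := by
    simp [List.filter_append, List.filter_reverse, hpv]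
  have hpu : p u = true := by simp [p]
  have hpx : p x = true := by simp [p]
  rw [localComp_adj_iff, interlacement_adj_iff_count_eq_one hu (hw v) (hw u),
    interlacement_adj_iff_count_eq_one hx (hw v) (hw x), interlacement_adj_iff,
    interlacement_adj_iff, hfilter, hfilter', ← List.count_filter hpu, ← List.count_filter hpx]
  refine and_congr_right fun hux => ?_
  rw [and_iff_right hux]
  refine alternates_append_reverse_iff hux (fun y hy => ?_) ?_ ?_
  · rw [← hfilter] at hy
    simpa [p] using List.of_mem_filter hy
  · rw [← hfilter, List.count_filter hpu, hw u]
  · rw [← hfilter, List.count_filter hpx, hw x]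

end KappaTransform

/-- for a double occurrence word `w = a v b v c` over `V` and a vertex `v`,
the interlacement graph of the κ-transform `w∗v = a v b' v c` (where `b'` reverses `b`)
is the simple local complement at `v` of the interlacement graph of `w`. -/
theorem interlacement_kappa_transform (w : List V) (v : V) (a b c : List V)
    (hw : ∀ u : V, w.count u = 2)
    (hdec : w = a ++ [v] ++ b ++ [v] ++ c) :
    interlacement (a ++ [v] ++ b.reverse ++ [v] ++ c) = localComp (interlacement w) v := by
  subst hdec
  have hw' : ∀ u, (a ++ [v] ++ b.reverse ++ [v] ++ c).count u = 2 := by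
    simpa only [List.count_append, List.count_reverse] using hw
  have hv_adj (x : V) : (interlacement (a ++ [v] ++ b.reverse ++ [v] ++ c)).Adj v x ↔
      (localComp (interlacement (a ++ [v] ++ b ++ [v] ++ c)) v).Adj v x := by
    rw [localComp_adj_self_left]
    rcases eq_or_ne x v with rfl | hx
    · simp
    · rw [interlacement_adj_iff_count_eq_one hx (hw' v) (hw' x),
        interlacement_adj_iff_count_eq_one hx (hw v) (hw x), List.count_reverse]
  ext u x
  rcases eq_or_ne u v with rfl | hu
  · exact hv_adj x
  rcases eq_or_ne x v with rfl | hx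
  · rw [SimpleGraph.adj_comm, (localComp _ _).adj_comm]
    exact hv_adj u
  exact interlacement_kappa_adj_of_ne hw hu hx
end

section
/- Kernel decomposition lemma (the key step in the proof of Theorem 8): let V be a finite type with decidable equality, partitioned into a singleton {v}, a subset N, and a subset R. Let M and M' be V × V matrices over GF(2) that agree in every entry except in column v, where: M_{v,v} = 0, M_{w,v} = 1 for all w ∈ N, M_{r,v} = 0 for all r ∈ R, while M'_{v,v} = 1 and M'_{u,v} = 0 for all u ≠ v. Suppose further that row v of both matrices is zero outside the diagonal entry, the N × N block of both matrices is the identity, the R × N block and the R × {v} block of both matrices are zero (so that M has block form [[0,0,0],[1,I,A],[0,0,B]] and M' has block form [[1,0,0],[0,I,A],[0,0,B]] with respect to the ordering {v}, N, R, where A is an arbitrary N × R block and B an arbitrary R × R block). Then the right null space of M' is contained in the right null space of M; the vector e_v + ∑_{w ∈ N} e_w lies in the right null space of M but not of M'; and the right null space of M is the direct sum of the right null space of M' and the one-dimensional span of e_v + ∑_{w ∈ N} e_w. In particular, dim ker M = dim ker M' + 1. -/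
variable {V : Type*} [Fintype V] [DecidableEq V]

/-- kernel decomposition, key step in the proof of Theorem 8: suppose `V` is
partitioned into `{v}`, `N`, `R`, and `M`, `M'` are `V × V` matrices over GF(2) that agree
off column `v` and have the block forms `[[0,0,0],[1,I,A],[0,0,B]]` and
`[[1,0,0],[0,I,A],[0,0,B]]` respectively.  Let `z = e_v + ∑_{w ∈ N} e_w`.  Then
`ker M' ⊆ ker M`, `z ∈ ker M \ ker M'`, `ker M` is the (internal direct) sum of `ker M'`
and the span of `z`, and `dim ker M = dim ker M' + 1`. -/
theorem ker_decomposition (v : V) (N R : Finset V)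
    (hvN : v ∉ N) (hvR : v ∉ R) (hNR : Disjoint N R)
    (hcover : ∀ u : V, u = v ∨ u ∈ N ∨ u ∈ R)
    (M M' : Matrix V V (ZMod 2))
    (hagree : ∀ w u : V, u ≠ v → M w u = M' w u)
    (hMvv : M v v = 0)
    (hMNv : ∀ w ∈ N, M w v = 1)
    (hMRv : ∀ r ∈ R, M r v = 0)
    (hM'vv : M' v v = 1)
    (hM'uv : ∀ u : V, u ≠ v → M' u v = 0)
    (hMrowv : ∀ u : V, u ≠ v → M v u = 0)
    (hM'rowv : ∀ u : V, u ≠ v → M' v u = 0)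
    (hNN : ∀ w ∈ N, ∀ u ∈ N, M w u = if w = u then 1 else 0)
    (hRN : ∀ r ∈ R, ∀ u ∈ N, M r u = 0) :
    let z : V → ZMod 2 := Pi.single v 1 + ∑ w ∈ N, Pi.single w 1
    LinearMap.ker M'.mulVecLin ≤ LinearMap.ker M.mulVecLin ∧
    z ∈ LinearMap.ker M.mulVecLin ∧
    z ∉ LinearMap.ker M'.mulVecLin ∧
    LinearMap.ker M.mulVecLin = LinearMap.ker M'.mulVecLin ⊔ Submodule.span (ZMod 2) {z} ∧
    Disjoint (LinearMap.ker M'.mulVecLin) (Submodule.span (ZMod 2) {z}) ∧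
    Module.finrank (ZMod 2) (LinearMap.ker M.mulVecLin) =
      Module.finrank (ZMod 2) (LinearMap.ker M'.mulVecLin) + 1 := by
  intro z
  -- evaluate A.mulVec z
  have hAz : ∀ (A : Matrix V V (ZMod 2)) (u : V),
      A.mulVec z u = A u v + ∑ w ∈ N, A u w := by
    intro A u
    have : A.mulVec z = A.mulVec (Pi.single v 1) + ∑ w ∈ N, A.mulVec (Pi.single w 1) := by
      show A.mulVecLin z = _
      simp only [z, map_add, map_sum]
      rfl
    rw [this]
    simp [Matrix.mulVec_single]
  -- if x v = 0, M and M' act the same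
  have hsame : ∀ x : V → ZMod 2, x v = 0 → M.mulVec x = M'.mulVec x := by
    intro x hx
    funext u
    simp only [Matrix.mulVec, dotProduct]
    refine Finset.sum_congr rfl fun t _ => ?_
    rcases eq_or_ne t v with rfl | ht
    · rw [hx, mul_zero, mul_zero]
    · rw [hagree u t ht]
  -- in ker M', coordinate v vanishes
  have hkv : ∀ x : V → ZMod 2, x ∈ LinearMap.ker M'.mulVecLin → x v = 0 := by
    intro x hx
    have h0 : M'.mulVec x v = 0 := congrFun hx v
    have : M'.mulVec x v = x v := by
      simp only [Matrix.mulVec, dotProduct]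
      rw [Finset.sum_eq_single v (fun t _ ht => by rw [hM'rowv t ht, zero_mul])
        (by simp), hM'vv, one_mul]
    rwa [this] at h0
  have hsub : LinearMap.ker M'.mulVecLin ≤ LinearMap.ker M.mulVecLin := by
    intro x hx
    have hv0 := hkv x hx
    have : M.mulVec x = M'.mulVec x := hsame x hv0
    simp only [LinearMap.mem_ker, Matrix.mulVecLin_apply] at hx ⊢
    rw [this, hx]
  have hzker : z ∈ LinearMap.ker M.mulVecLin := by
    rw [LinearMap.mem_ker]
    funext u
    show M.mulVec z u = 0
    rw [hAz]
    rcases hcover u with rfl | hu | hu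
    · rw [hMvv, Finset.sum_eq_zero (fun w hw => hMrowv w (fun h => hvN (h ▸ hw)))]
      simp
    · rw [hMNv u hu]
      have : ∑ w ∈ N, M u w = 1 := by
        rw [Finset.sum_congr rfl (fun w hw => hNN u hu w hw)]
        simp [hu]
      rw [this]; decide
    · rw [hMRv u hu, Finset.sum_eq_zero (fun w hw => hRN u hu w hw)]
      simp
  have hznker : z ∉ LinearMap.ker M'.mulVecLin := by
    intro hz
    have h0 : M'.mulVec z v = 0 := congrFun hz v
    rw [hAz, hM'vv,
      Finset.sum_eq_zero (fun w hw => hM'rowv w (fun h => hvN (h ▸ hw)))] at h0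
    simp at h0
  have hzv : z v = 1 := by
    simp only [z, Pi.add_apply, Finset.sum_apply, Pi.single_eq_same]
    have h0 : (∑ c ∈ N, Pi.single c (1 : ZMod 2) v) = 0 :=
      Finset.sum_eq_zero fun w hw =>
        Pi.single_eq_of_ne (show v ≠ w by rintro rfl; exact hvN hw) 1
    rw [h0, add_zero]
  have hzne : z ≠ 0 := by
    intro h
    rw [h] at hzv
    simp at hzv
  have hsup : LinearMap.ker M.mulVecLin
      = LinearMap.ker M'.mulVecLin ⊔ Submodule.span (ZMod 2) {z} := by
    apply le_antisymm
    · intro x hx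
      rcases (by decide : ∀ a : ZMod 2, a = 0 ∨ a = 1) (x v) with h0 | h1
      · exact Submodule.mem_sup_left (by
          rw [LinearMap.mem_ker, Matrix.mulVecLin_apply, ← hsame x h0]
          exact hx)
      · have hxz : x - z ∈ LinearMap.ker M.mulVecLin := sub_mem hx hzker
        have hv0 : (x - z) v = 0 := by
          simp [Pi.sub_apply, h1, hzv]
        have hxz' : x - z ∈ LinearMap.ker M'.mulVecLin := by
          rw [LinearMap.mem_ker, Matrix.mulVecLin_apply, ← hsame _ hv0]
          exact hxz
        have : x = (x - z) + z := by ring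
        rw [this]
        exact Submodule.add_mem _ (Submodule.mem_sup_left hxz')
          (Submodule.mem_sup_right (Submodule.mem_span_singleton_self z))
    · rw [sup_le_iff]
      exact ⟨hsub, (Submodule.span_singleton_le_iff_mem z _).mpr hzker⟩
  have hdisj : Disjoint (LinearMap.ker M'.mulVecLin) (Submodule.span (ZMod 2) {z}) := by
    rw [Submodule.disjoint_def]
    intro x hx hxs
    obtain ⟨c, rfl⟩ := Submodule.mem_span_singleton.mp hxs
    rcases (by decide : ∀ a : ZMod 2, a = 0 ∨ a = 1) c with rfl | rfl
    · simp
    · exfalso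
      apply hznker
      simpa using hx
  refine ⟨hsub, hzker, hznker, hsup, hdisj, ?_⟩
  have := Submodule.finrank_sup_add_finrank_inf_eq
      (LinearMap.ker M'.mulVecLin) (Submodule.span (ZMod 2) {z})
  rw [← hsup, disjoint_iff.mp hdisj, finrank_span_singleton hzne] at this
  simpa using this
end
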